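/- arXiv:0912.1121 — 3 statements merged into one kernel-verified Lean document; each statement's English description precedes it below -/
import Mathlib

section
/- Let Γ ⊆ Δ and Λ be subspaces of Euclidean space ℝ^d with Δ and Λ nonzero, and let π denote the orthogonal projection of ℝ^d onto the orthogonal complement Γ^⊥ of Γ (π(Δ) and π(Λ), the images of Δ and Λ under π, realize the quotients Δ/Γ and Λ/Γ). If π(Δ) and π(Λ) are both nonzero, then the minimum angle between Δ and Λ is at most the minimum angle between π(Δ) and π(Λ): ∠(Δ,Λ) ≤ ∠(π(Δ), π(Λ)). -/
open Set

/-- The minimum angle between two subspaces of Euclidean space: the infimum of the angles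
between nonzero vectors of the two subspaces. -/
noncomputable def minAngle {d : ℕ} (V W : Submodule ℝ (EuclideanSpace ℝ (Fin d))) : ℝ :=
  sInf {θ : ℝ | ∃ u ∈ V, ∃ w ∈ W, u ≠ 0 ∧ w ≠ 0 ∧ θ = InnerProductGeometry.angle u w}

/-- The orthogonal projection of `ℝ^d` onto the orthogonal complement of `Γ`,
as a linear endomorphism of `ℝ^d`. -/
noncomputable def orthProjOnto {d : ℕ} (Γ : Submodule ℝ (EuclideanSpace ℝ (Fin d))) :
    EuclideanSpace ℝ (Fin d) →ₗ[ℝ] EuclideanSpace ℝ (Fin d) :=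
  (Γᗮ.subtype).comp (Γᗮ.orthogonalProjectionOnto).toLinearMap

/-!
For `u ∈ Δ` and `w ∈ Λ` it suffices to find a nonzero `x ∈ Δ` with `∠(x, w) ≤ ∠(π u, π w)`; take
`x = P w`, with `P` the orthogonal projection onto `Δ`. Write `w = b + g` with `b = π w` and
`g ∈ Γ ⊆ Δ`. Since `⟪P w, w⟫ = ‖P w‖²`, we have `cos ∠(P w, w) = ‖P w‖ / ‖w‖`, where `P w = P b + g`.
As `g` is orthogonal to both `P b` and `b`, adding it can only increase this ratio:
`‖P b‖ / ‖b‖ ≤ ‖P b + g‖ / ‖b + g‖`. By Cauchy–Schwarz, `‖P b‖ / ‖b‖` bounds `cos ∠(π u, b)`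
because `π u ∈ Δ`. (If `P w = 0`, then `g = 0` and `π u` itself serves.)
-/

open InnerProductGeometry RealInnerProductSpace

section InnerProductSpace

variable {E : Type*} [NormedAddCommGroup E] [InnerProductSpace ℝ E]

lemma InnerProductGeometry.angle_le_angle_of_cos_le {a b x y : E}
    (h : Real.cos (angle a b) ≤ Real.cos (angle x y)) : angle x y ≤ angle a b := by
  rw [cos_angle, cos_angle] at h
  exact Real.arccos_le_arccos h

lemma div_norm_le_div_norm_add_of_inner_eq_zero {p b g : E} (hpg : ⟪p, g⟫ = 0)
    (hbg : ⟪b, g⟫ = 0) (hpb : ‖p‖ ≤ ‖b‖) : ‖p‖ / ‖b‖ ≤ ‖p + g‖ / ‖b + g‖ := by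
  rcases (norm_nonneg b).eq_or_lt with hb | hb
  · rw [← hb, div_zero]
    positivity
  have hp2 : ‖p + g‖ ^ 2 = ‖p‖ ^ 2 + ‖g‖ ^ 2 := by
    rw [sq, sq, sq, norm_add_sq_eq_norm_sq_add_norm_sq_real hpg]
  have hb2 : ‖b + g‖ ^ 2 = ‖b‖ ^ 2 + ‖g‖ ^ 2 := by
    rw [sq, sq, sq, norm_add_sq_eq_norm_sq_add_norm_sq_real hbg]
  have hbg_pos : 0 < ‖b + g‖ := by nlinarith [norm_nonneg (b + g), sq_nonneg ‖g‖]
  rw [div_le_div_iff₀ hb hbg_pos]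
  refine le_of_pow_le_pow_left₀ two_ne_zero (by positivity) ?_
  rw [mul_pow, mul_pow, hp2, hb2]
  nlinarith [mul_le_mul_of_nonneg_left (pow_le_pow_left₀ (norm_nonneg p) hpb 2) (sq_nonneg ‖g‖)]

namespace Submodule

variable (K : Submodule ℝ E) [K.HasOrthogonalProjection]

lemma real_inner_starProjection_self (y : E) :
    ⟪K.starProjection y, y⟫ = ‖K.starProjection y‖ ^ 2 := by
  have h := K.inner_starProjection_left_eq_right (K.starProjection y) y
  rw [starProjection_eq_self_iff.mpr (K.starProjection_apply_mem y)] at h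
  rw [h, real_inner_self_eq_norm_sq]

lemma cos_angle_starProjection_self (y : E) :
    Real.cos (angle (K.starProjection y) y) = ‖K.starProjection y‖ / ‖y‖ := by
  rcases eq_or_ne (K.starProjection y) 0 with h | h
  · simp [h]
  rw [cos_angle, real_inner_starProjection_self, sq, mul_div_mul_left _ _ (norm_ne_zero_iff.mpr h)]

lemma cos_angle_le_norm_starProjection_div {x : E} (hx : x ∈ K) (y : E) :
    Real.cos (angle x y) ≤ ‖K.starProjection y‖ / ‖y‖ := by
  rcases eq_or_ne x 0 with rfl | hx0
  · simp only [angle_zero_left, Real.cos_pi_div_two]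
    positivity
  have hxy : ⟪x, y⟫ = ⟪x, K.starProjection y⟫ := by
    rw [← inner_starProjection_left_eq_right, starProjection_eq_self_iff.mpr hx]
  calc Real.cos (angle x y) = ⟪x, K.starProjection y⟫ / (‖x‖ * ‖y‖) := by rw [cos_angle, hxy]
    _ ≤ ‖x‖ * ‖K.starProjection y‖ / (‖x‖ * ‖y‖) := by gcongr; exact real_inner_le_norm _ _
    _ = ‖K.starProjection y‖ / ‖y‖ := mul_div_mul_left _ _ (norm_ne_zero_iff.mpr hx0)

lemma exists_angle_add_le_angle {a b g : E} (ha : a ∈ K) (ha0 : a ≠ 0) (hg : g ∈ K)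
    (hbg : ⟪b, g⟫ = 0) : ∃ x ∈ K, x ≠ 0 ∧ angle x (b + g) ≤ angle a b := by
  have hPbg : ⟪K.starProjection b, g⟫ = 0 := by
    rw [inner_starProjection_left_eq_right, starProjection_eq_self_iff.mpr hg, hbg]
  have hP : K.starProjection (b + g) = K.starProjection b + g := by
    rw [map_add, starProjection_eq_self_iff.mpr hg]
  by_cases hx0 : K.starProjection (b + g) = 0
  · have hg0 : g = 0 := by
      have := norm_add_sq_eq_norm_sq_add_norm_sq_real hPbg
      rw [← hP, hx0, norm_zero] at this
      exact norm_eq_zero.mp (by nlinarith [mul_self_nonneg ‖K.starProjection b‖, norm_nonneg g])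
    exact ⟨a, ha, ha0, by rw [hg0, add_zero]⟩
  refine ⟨_, K.starProjection_apply_mem _, hx0, angle_le_angle_of_cos_le ?_⟩
  calc Real.cos (angle a b) ≤ ‖K.starProjection b‖ / ‖b‖ :=
        K.cos_angle_le_norm_starProjection_div ha b
    _ ≤ ‖K.starProjection b + g‖ / ‖b + g‖ :=
      div_norm_le_div_norm_add_of_inner_eq_zero hPbg hbg (K.norm_starProjection_apply_le b)
    _ = Real.cos (angle (K.starProjection (b + g)) (b + g)) := by
      rw [cos_angle_starProjection_self, hP]

end Submodule

end InnerProductSpace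

section EuclideanSpace

variable {d : ℕ}

lemma minAngle_le_angle {V W : Submodule ℝ (EuclideanSpace ℝ (Fin d))}
    {u w : EuclideanSpace ℝ (Fin d)} (hu : u ∈ V) (hw : w ∈ W) (hu0 : u ≠ 0) (hw0 : w ≠ 0) :
    minAngle V W ≤ angle u w :=
  csInf_le ⟨0, by rintro _ ⟨u, -, w, -, -, -, rfl⟩; exact angle_nonneg u w⟩
    ⟨u, hu, w, hw, hu0, hw0, rfl⟩

lemma le_minAngle {V W : Submodule ℝ (EuclideanSpace ℝ (Fin d))} {θ : ℝ} (hV : V ≠ ⊥)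
    (hW : W ≠ ⊥)
    (h : ∀ u ∈ V, ∀ w ∈ W, u ≠ 0 → w ≠ 0 → θ ≤ angle u w) : θ ≤ minAngle V W := by
  obtain ⟨u, hu, hu0⟩ := Submodule.exists_mem_ne_zero_of_ne_bot hV
  obtain ⟨w, hw, hw0⟩ := Submodule.exists_mem_ne_zero_of_ne_bot hW
  refine le_csInf ⟨_, u, hu, w, hw, hu0, hw0, rfl⟩ ?_
  rintro _ ⟨u, hu, w, hw, hu0, hw0, rfl⟩
  exact h u hu w hw hu0 hw0

lemma orthProjOnto_apply (Γ : Submodule ℝ (EuclideanSpace ℝ (Fin d)))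
    (z : EuclideanSpace ℝ (Fin d)) : orthProjOnto Γ z = z - Γ.starProjection z :=
  Γ.starProjection_orthogonal_val z

lemma orthProjOnto_mem_orthogonal (Γ : Submodule ℝ (EuclideanSpace ℝ (Fin d)))
    (z : EuclideanSpace ℝ (Fin d)) : orthProjOnto Γ z ∈ Γᗮ :=
  Γᗮ.starProjection_apply_mem z

lemma orthProjOnto_mem_of_le {Γ Δ : Submodule ℝ (EuclideanSpace ℝ (Fin d))} (hΓΔ : Γ ≤ Δ)
    {z : EuclideanSpace ℝ (Fin d)} (hz : z ∈ Δ) : orthProjOnto Γ z ∈ Δ := by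
  rw [orthProjOnto_apply]
  exact Δ.sub_mem hz (hΓΔ (Γ.starProjection_apply_mem z))

end EuclideanSpace

theorem minAngle_le_minAngle_of_orthProj_general {d : ℕ}
    (Γ Δ Λ : Submodule ℝ (EuclideanSpace ℝ (Fin d)))
    (hΓΔ : Γ ≤ Δ)
    (hπΔ : Δ.map (orthProjOnto Γ) ≠ ⊥) (hπΛ : Λ.map (orthProjOnto Γ) ≠ ⊥) :
    minAngle Δ Λ ≤ minAngle (Δ.map (orthProjOnto Γ)) (Λ.map (orthProjOnto Γ)) := by
  refine le_minAngle hπΔ hπΛ ?_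
  rintro _ ⟨u, hu, rfl⟩ _ ⟨w, hw, rfl⟩ hu0 hw0
  have hg : Γ.starProjection w ∈ Γ := Γ.starProjection_apply_mem w
  have hbg : ⟪orthProjOnto Γ w, Γ.starProjection w⟫ = 0 :=
    (Γ.mem_orthogonal' _).mp (orthProjOnto_mem_orthogonal Γ w) _ hg
  obtain ⟨x, hx, hx0, hle⟩ :=
    Δ.exists_angle_add_le_angle (orthProjOnto_mem_of_le hΓΔ hu) hu0 (hΓΔ hg) hbg
  have hw_eq : orthProjOnto Γ w + Γ.starProjection w = w := by
    rw [orthProjOnto_apply, sub_add_cancel]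
  rw [hw_eq] at hle
  have hw0' : w ≠ 0 := fun h ↦ hw0 (by rw [h, map_zero])
  exact (minAngle_le_angle hx hw hx0 hw0').trans hle

theorem minAngle_le_minAngle_of_orthProj {d : ℕ}
    (Γ Δ Λ : Submodule ℝ (EuclideanSpace ℝ (Fin d)))
    (hΓΔ : Γ ≤ Δ) (hΔ : Δ ≠ ⊥) (hΛ : Λ ≠ ⊥)
    (hπΔ : Δ.map (orthProjOnto Γ) ≠ ⊥) (hπΛ : Λ.map (orthProjOnto Γ) ≠ ⊥) :
    minAngle Δ Λ ≤ minAngle (Δ.map (orthProjOnto Γ)) (Λ.map (orthProjOnto Γ)) :=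
  minAngle_le_minAngle_of_orthProj_general Γ Δ Λ hΓΔ hπΔ hπΛ
end

section
/- For every real ε > 0 there exists an integer N(ε) ≥ 1 such that for every integer p ≥ N(ε) and every finite sequence A_1, …, A_p of matrices in SL(2,ℝ), there exists a sequence of angles α_1, …, α_p in the open interval (−ε, ε) such that, setting B_i = R_{α_i}·A_i (the composition of A_i with the rotation R_{α_i} of angle α_i), the product matrix B_p·B_{p−1}⋯B_1 has only real eigenvalues. -/
/-!
Suppose that every choice of angles in `[0, δ]` leaves the product elliptic. An elliptic
matrix of `SL(2,ℝ)` is conjugate to a rotation, whose signed angle `θ ∈ [-π, π]` is a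
conjugacy invariant, read off from the trace and the sign of `M 1 0 - M 0 1`. Composing one
factor with `R_t` replaces the product `C D` by `C R_t D`, which is conjugate to `R_t (D C)`,
and as long as `R_t (D C)` stays elliptic its angle grows at least as fast as `t`: the pair
(trace, `M 1 0 - M 0 1`) turns at unit speed on a circle of radius `≥ 2`. Turning the
factors one after the other by `δ` thus makes `θ` grow by `p δ > 2π`, which is impossible.
-/

open Matrix Set

/-- The rotation matrix of angle `α`. -/
noncomputable def rotMat (α : ℝ) : Matrix (Fin 2) (Fin 2) ℝ :=
  !![Real.cos α, -Real.sin α; Real.sin α, Real.cos α]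

/-- The multiset of complex eigenvalues (with multiplicity) of a real square matrix:
the roots in `ℂ` of its characteristic polynomial. -/
noncomputable def specC {n : Type*} [Fintype n] [DecidableEq n] (M : Matrix n n ℝ) :
    Multiset ℂ :=
  ((M.map (algebraMap ℝ ℂ)).charpoly).roots

/-- The product `A_{p-1} ⬝ A_{p-2} ⬝ ⋯ ⬝ A_0` of a finite sequence of square matrices. -/
noncomputable def seqProd' {n : Type*} [Fintype n] [DecidableEq n] {p : ℕ}
    (A : Fin p → Matrix n n ℝ) : Matrix n n ℝ :=
  (List.ofFn A).reverse.prod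

lemma trace_sq_lt_four_mul_det_of_mem_specC {M : Matrix (Fin 2) (Fin 2) ℝ} {z : ℂ}
    (hz : z ∈ specC M) (him : z.im ≠ 0) : M.trace ^ 2 < 4 * M.det := by
  have hroot : z ^ 2 - (M.trace : ℂ) * z + (M.det : ℂ) = 0 := by
    rw [specC, Polynomial.mem_roots (charpoly_monic _).ne_zero, charpoly_fin_two] at hz
    simpa [trace_fin_two, det_fin_two] using hz
  have hre := congrArg Complex.re hroot
  have him' := congrArg Complex.im hroot
  simp only [Complex.add_re, Complex.sub_re, Complex.mul_re, Complex.add_im, Complex.sub_im,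
    Complex.mul_im, pow_two, Complex.ofReal_re, Complex.ofReal_im, Complex.zero_re,
    Complex.zero_im] at hre him'
  have hmid : 2 * z.re = M.trace := by
    apply mul_left_cancel₀ him; linarith
  nlinarith [mul_self_pos.2 him]

lemma List.exists_reverse_prod_set_eq {M : Type*} [Monoid M] (S : Submonoid M) {l : List M}
    (hl : ∀ x ∈ l, x ∈ S) {k : ℕ} (hk : k < l.length) :
    ∃ C ∈ S, ∃ D ∈ S, ∀ a, (l.set k a).reverse.prod = C * a * D := by
  refine ⟨(l.drop (k + 1)).reverse.prod, S.list_prod_mem fun x hx => hl x ?_,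
    (l.take k).reverse.prod, S.list_prod_mem fun x hx => hl x ?_, fun a => ?_⟩
  · exact List.mem_of_mem_drop (List.mem_reverse.1 hx)
  · exact List.mem_of_mem_take (List.mem_reverse.1 hx)
  · simp [List.set_eq_take_append_cons_drop, hk, mul_assoc]

lemma List.ofFn_update {α : Type*} {p : ℕ} (f : Fin p → α) (k : Fin p) (a : α) :
    List.ofFn (Function.update f k a) = (List.ofFn f).set k a := by
  refine List.ext_getElem (by simp) fun i h₁ h₂ => ?_
  simp [List.getElem_set, Function.update_apply, Fin.ext_iff, eq_comm]

lemma exists_seqProd'_update_eq {n : Type*} [Fintype n] [DecidableEq n] {p : ℕ}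
    {B : Fin p → Matrix n n ℝ} (hB : ∀ i, (B i).det = 1) (k : Fin p) :
    ∃ C D : Matrix n n ℝ, C.det = 1 ∧ D.det = 1 ∧
      ∀ N, seqProd' (Function.update B k N) = C * N * D := by
  obtain ⟨C, hC, D, hD, h⟩ := (List.ofFn B).exists_reverse_prod_set_eq
    (MonoidHom.mker (detMonoidHom : Matrix n n ℝ →* ℝ)) (k := k)
    (by simpa [List.mem_ofFn] using hB) (by simp)
  exact ⟨C, D, hC, hD, fun N => by rw [seqProd', List.ofFn_update, h]⟩

lemma det_seqProd' {n : Type*} [Fintype n] [DecidableEq n] {p : ℕ} {B : Fin p → Matrix n n ℝ}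
    (hB : ∀ i, (B i).det = 1) : (seqProd' B).det = 1 :=
  (MonoidHom.mker (detMonoidHom : Matrix n n ℝ →* ℝ)).list_prod_mem
    (by simpa [List.mem_ofFn] using hB)

noncomputable def skewTrace (M : Matrix (Fin 2) (Fin 2) ℝ) : ℝ := M 1 0 - M 0 1

/-- `det [v, M v]` for `v = (x, y)`. -/
noncomputable def orientedArea (M : Matrix (Fin 2) (Fin 2) ℝ) (x y : ℝ) : ℝ :=
  x * (M 1 0 * x + M 1 1 * y) - y * (M 0 0 * x + M 0 1 * y)

lemma skewTrace_mul_orientedArea_pos {M : Matrix (Fin 2) (Fin 2) ℝ}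
    (hM : M.trace ^ 2 < 4 * M.det) {x y : ℝ} (hxy : x ≠ 0 ∨ y ≠ 0) :
    0 < skewTrace M * orientedArea M x y := by
  have hxy' : 0 < x ^ 2 + y ^ 2 := by
    rcases hxy with h | h <;> positivity
  -- complete the square in `x` and in `y`
  have key : 4 * (skewTrace M * orientedArea M x y) =
      (2 * M 1 0 * x + (M 1 1 - M 0 0) * y) ^ 2 + (2 * M 0 1 * y - (M 1 1 - M 0 0) * x) ^ 2
        + (4 * M.det - M.trace ^ 2) * (x ^ 2 + y ^ 2) := by
    rw [skewTrace, orientedArea, trace_fin_two, det_fin_two]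
    ring
  nlinarith [sq_nonneg (2 * M 1 0 * x + (M 1 1 - M 0 0) * y),
    sq_nonneg (2 * M 0 1 * y - (M 1 1 - M 0 0) * x), mul_pos (sub_pos.2 hM) hxy']

lemma orientedArea_of_mul_eq_mul {P X Y : Matrix (Fin 2) (Fin 2) ℝ} (h : Y * P = P * X) :
    orientedArea Y (P 0 0) (P 1 0) = P.det * X 1 0 := by
  have h00 := congrFun (congrFun h 0) 0
  have h10 := congrFun (congrFun h 1) 0
  simp only [mul_apply, Fin.sum_univ_two] at h00 h10
  rw [orientedArea, det_fin_two]
  linear_combination P 0 0 * h10 - P 1 0 * h00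

lemma trace_eq_of_mul_eq_mul {P X Y : Matrix (Fin 2) (Fin 2) ℝ} (hP : IsUnit P.det)
    (h : Y * P = P * X) : Y.trace = X.trace := by
  rw [← mul_nonsing_inv_cancel_right P Y hP, h, trace_mul_comm, ← Matrix.mul_assoc,
    nonsing_inv_mul _ hP, Matrix.one_mul]

lemma rotMat_zero : rotMat 0 = 1 := by
  ext i j; fin_cases i <;> fin_cases j <;> simp [rotMat]

lemma det_rotMat (t : ℝ) : (rotMat t).det = 1 := by
  rw [rotMat, det_fin_two_of]
  linear_combination Real.cos_sq_add_sin_sq t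

lemma trace_rotMat_mul (t : ℝ) (M : Matrix (Fin 2) (Fin 2) ℝ) :
    (rotMat t * M).trace = Real.cos t * M.trace - Real.sin t * skewTrace M := by
  rw [rotMat, eta_fin_two M, mul_fin_two]
  simp [trace_fin_two, skewTrace]
  ring

lemma skewTrace_rotMat_mul (t : ℝ) (M : Matrix (Fin 2) (Fin 2) ℝ) :
    skewTrace (rotMat t * M) = Real.sin t * M.trace + Real.cos t * skewTrace M := by
  rw [rotMat, eta_fin_two M, mul_fin_two]
  simp [trace_fin_two, skewTrace]
  ring

lemma four_mul_det_le_trace_sq_add_skewTrace_sq (M : Matrix (Fin 2) (Fin 2) ℝ) :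
    4 * M.det ≤ M.trace ^ 2 + skewTrace M ^ 2 := by
  rw [trace_fin_two, det_fin_two, skewTrace]
  nlinarith [sq_nonneg (M 0 0 - M 1 1), sq_nonneg (M 0 1 + M 1 0)]

/-- For elliptic `M ∈ SL(2,ℝ)`, the `θ ∈ (-π, π)` such that `M` is conjugate to `R_θ` by a matrix
of positive determinant. -/
noncomputable def ellipticAngle (M : Matrix (Fin 2) (Fin 2) ℝ) : ℝ :=
  Real.sign (skewTrace M) * Real.arccos (M.trace / 2)

lemma abs_ellipticAngle_le_pi (M : Matrix (Fin 2) (Fin 2) ℝ) : |ellipticAngle M| ≤ Real.pi := by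
  have hsign : |Real.sign (skewTrace M)| ≤ 1 := by
    rcases Real.sign_apply_eq (skewTrace M) with h | h | h <;> simp [h]
  rw [ellipticAngle, abs_mul, abs_of_nonneg (Real.arccos_nonneg _)]
  simpa using mul_le_mul hsign (Real.arccos_le_pi _) (Real.arccos_nonneg _) zero_le_one

lemma Real.sign_eq_sign_of_mul_pos {x y : ℝ} (h : 0 < x * y) : Real.sign x = Real.sign y := by
  rcases mul_pos_iff.1 h with ⟨hx, hy⟩ | ⟨hx, hy⟩
  · rw [Real.sign_of_pos hx, Real.sign_of_pos hy]
  · rw [Real.sign_of_neg hx, Real.sign_of_neg hy]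

lemma IsPreconnected.sign_eq_of_ne_zero {α : Type*} [TopologicalSpace α] {S : Set α}
    (hS : IsPreconnected S) {f : α → ℝ} (hf : ContinuousOn f S) (hne : ∀ x ∈ S, f x ≠ 0)
    {a b : α} (ha : a ∈ S) (hb : b ∈ S) : Real.sign (f a) = Real.sign (f b) := by
  refine Real.sign_eq_sign_of_mul_pos (not_le.1 fun hab => ?_)
  obtain ⟨c, hc, hc0⟩ : (0 : ℝ) ∈ f '' S := by
    rcases le_total (f a) (f b) with h | h
    · exact hS.intermediate_value ha hb hf ⟨by nlinarith, by nlinarith⟩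
    · exact hS.intermediate_value hb ha hf ⟨by nlinarith, by nlinarith⟩
  exact hne c hc hc0

lemma sign_skewTrace_eq_of_mul_eq_mul {P X Y : Matrix (Fin 2) (Fin 2) ℝ} (hP : 0 < P.det)
    (hX : X.trace ^ 2 < 4 * X.det) (h : Y * P = P * X) :
    Real.sign (skewTrace Y) = Real.sign (skewTrace X) := by
  have hdet : Y.det = X.det := by
    have := congrArg det h
    rw [det_mul, det_mul, mul_comm] at this
    exact mul_left_cancel₀ hP.ne' this
  have hY : Y.trace ^ 2 < 4 * Y.det := by
    rwa [trace_eq_of_mul_eq_mul hP.ne'.isUnit h, hdet]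
  have hv : P 0 0 ≠ 0 ∨ P 1 0 ≠ 0 := by
    by_contra! hv
    rw [det_fin_two, hv.1, hv.2] at hP
    simp at hP
  -- the oriented areas of `Y` at `P e₀` and of `X` at `e₀` differ by the factor `det P > 0`
  have hYv := skewTrace_mul_orientedArea_pos hY hv
  have hXe := skewTrace_mul_orientedArea_pos hX (x := 1) (y := 0) (Or.inl one_ne_zero)
  rw [orientedArea_of_mul_eq_mul h] at hYv
  simp only [orientedArea, mul_one, mul_zero, add_zero, one_mul, zero_mul, sub_zero] at hXe
  rw [Real.sign_eq_sign_of_mul_pos (y := X 1 0) (by nlinarith),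
    Real.sign_eq_sign_of_mul_pos hXe]

lemma ellipticAngle_eq_of_mul_eq_mul {P X Y : Matrix (Fin 2) (Fin 2) ℝ} (hP : 0 < P.det)
    (hX : X.trace ^ 2 < 4 * X.det) (h : Y * P = P * X) :
    ellipticAngle Y = ellipticAngle X := by
  rw [ellipticAngle, ellipticAngle, sign_skewTrace_eq_of_mul_eq_mul hP hX h,
    trace_eq_of_mul_eq_mul hP.ne'.isUnit h]

lemma hasDerivAt_trace_rotMat_mul (M : Matrix (Fin 2) (Fin 2) ℝ) (t : ℝ) :
    HasDerivAt (fun s => (rotMat s * M).trace) (-skewTrace (rotMat t * M)) t := by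
  simp only [trace_rotMat_mul, skewTrace_rotMat_mul]
  exact (((Real.hasDerivAt_cos t).mul_const M.trace).sub
    ((Real.hasDerivAt_sin t).mul_const (skewTrace M))).congr_deriv (by ring)

lemma continuous_skewTrace_rotMat_mul (M : Matrix (Fin 2) (Fin 2) ℝ) :
    Continuous fun t => skewTrace (rotMat t * M) := by
  simp only [skewTrace_rotMat_mul]
  fun_prop

lemma hasDerivAt_arccos_trace_rotMat_mul (M : Matrix (Fin 2) (Fin 2) ℝ) {t : ℝ}
    (ht : (rotMat t * M).trace ^ 2 < 4) :
    HasDerivAt (fun s => Real.arccos ((rotMat s * M).trace / 2))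
      (skewTrace (rotMat t * M) / √(4 - (rotMat t * M).trace ^ 2)) t := by
  set f := (rotMat t * M).trace
  have h1 : f / 2 ≠ -1 := by intro h; nlinarith
  have h2 : f / 2 ≠ 1 := by intro h; nlinarith
  have hsqrt : √(4 - f ^ 2) = 2 * √(1 - (f / 2) ^ 2) := by
    rw [show 4 - f ^ 2 = 2 ^ 2 * (1 - (f / 2) ^ 2) by ring, Real.sqrt_mul (by norm_num),
      Real.sqrt_sq zero_le_two]
  refine ((Real.hasDerivAt_arccos h1 h2).comp t
    ((hasDerivAt_trace_rotMat_mul M t).div_const 2)).congr_deriv ?_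
  rw [hsqrt]
  ring

lemma Real.one_le_sign_mul_div_sqrt {f g : ℝ} (hfg : 4 ≤ f ^ 2 + g ^ 2) (hf : f ^ 2 < 4) :
    1 ≤ Real.sign g * g / √(4 - f ^ 2) := by
  have habs : Real.sign g * g = |g| := by
    rcases (show g ≠ 0 by rintro rfl; linarith).lt_or_gt with h | h
    · rw [Real.sign_of_neg h, abs_of_neg h]
      ring
    · rw [Real.sign_of_pos h, abs_of_pos h, one_mul]
  rw [habs, one_le_div (Real.sqrt_pos.2 (by linarith)), ← Real.sqrt_sq_eq_abs]
  exact Real.sqrt_le_sqrt (by linarith)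

lemma monotoneOn_ellipticAngle_rotMat_mul_sub {M : Matrix (Fin 2) (Fin 2) ℝ} (hM : M.det = 1)
    {a b : ℝ} (h : ∀ t ∈ Icc a b, (rotMat t * M).trace ^ 2 < 4) :
    MonotoneOn (fun t => ellipticAngle (rotMat t * M) - t) (Icc a b) := by
  have hne : ∀ t ∈ Icc a b, skewTrace (rotMat t * M) ≠ 0 := by
    intro t ht hzero
    have := four_mul_det_le_trace_sq_add_skewTrace_sq (rotMat t * M)
    rw [det_mul, det_rotMat, hM, hzero] at this
    linarith [h t ht]
  rcases (Icc a b).eq_empty_or_nonempty with hS | ⟨t₀, ht₀⟩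
  · rw [hS]
    exact fun _ h => h.elim
  set σ := Real.sign (skewTrace (rotMat t₀ * M))
  have hσ : ∀ t ∈ Icc a b, Real.sign (skewTrace (rotMat t * M)) = σ := fun t ht =>
    isPreconnected_Icc.sign_eq_of_ne_zero (continuous_skewTrace_rotMat_mul M).continuousOn
      hne ht ht₀
  have hcont : Continuous fun t => σ * Real.arccos ((rotMat t * M).trace / 2) - t := by
    simp only [trace_rotMat_mul]
    fun_prop
  refine MonotoneOn.congr (monotoneOn_of_hasDerivWithinAt_nonneg (convex_Icc a b)
    hcont.continuousOn (f' := fun t =>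
      σ * (skewTrace (rotMat t * M) / √(4 - (rotMat t * M).trace ^ 2)) - 1)
    (fun t ht => ?_) (fun t ht => ?_)) fun t ht => ?_
  · rw [interior_Icc] at ht
    exact ((((hasDerivAt_arccos_trace_rotMat_mul M (h t (Ioo_subset_Icc_self ht))).const_mul
      σ).sub (hasDerivAt_id t))).hasDerivWithinAt
  · rw [interior_Icc] at ht
    have ht' := Ioo_subset_Icc_self ht
    have hsum := four_mul_det_le_trace_sq_add_skewTrace_sq (rotMat t * M)
    rw [det_mul, det_rotMat, hM, one_mul, mul_one] at hsum
    rw [← hσ t ht', mul_div_assoc', sub_nonneg]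
    exact Real.one_le_sign_mul_div_sqrt hsum (h t ht')
  · rw [ellipticAngle, hσ t ht]

lemma le_ellipticAngle_mul_rotMat_mul {C D : Matrix (Fin 2) (Fin 2) ℝ} (hC : C.det = 1)
    (hD : D.det = 1) {Δ : ℝ} (hΔ : 0 ≤ Δ)
    (h : ∀ t ∈ Icc 0 Δ, (C * rotMat t * D).trace ^ 2 < 4) :
    ellipticAngle (C * D) + Δ ≤ ellipticAngle (C * rotMat Δ * D) := by
  have htrace : ∀ t, (C * rotMat t * D).trace = (rotMat t * (D * C)).trace := fun t => by
    rw [Matrix.mul_assoc, trace_mul_comm, Matrix.mul_assoc]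
  have hconj : ∀ t ∈ Icc 0 Δ,
      ellipticAngle (C * rotMat t * D) = ellipticAngle (rotMat t * (D * C)) := fun t ht =>
    ellipticAngle_eq_of_mul_eq_mul (hC ▸ one_pos)
      (by rw [det_mul, det_mul, det_rotMat, hD, hC, ← htrace]; linarith [h t ht])
      (by simp only [Matrix.mul_assoc])
  have hmono := monotoneOn_ellipticAngle_rotMat_mul_sub (by rw [det_mul, hD, hC, one_mul])
    (fun t ht => htrace t ▸ h t ht) (left_mem_Icc.2 hΔ) (right_mem_Icc.2 hΔ) hΔ
  dsimp only at hmono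
  rw [← hconj Δ (right_mem_Icc.2 hΔ), ← hconj 0 (left_mem_Icc.2 hΔ), rotMat_zero,
    Matrix.mul_one] at hmono
  linarith

lemma le_ellipticAngle_seqProd'_update {p : ℕ} {A : Fin p → Matrix (Fin 2) (Fin 2) ℝ}
    (hA : ∀ i, (A i).det = 1) (α : Fin p → ℝ) (k : Fin p) {Δ : ℝ} (hΔ : 0 ≤ Δ)
    (h : ∀ t ∈ Icc 0 Δ,
      (seqProd' fun i => rotMat (Function.update α k t i) * A i).trace ^ 2 < 4) :
    ellipticAngle (seqProd' fun i => rotMat (Function.update α k 0 i) * A i) + Δ ≤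
      ellipticAngle (seqProd' fun i => rotMat (Function.update α k Δ i) * A i) := by
  obtain ⟨C, D, hC, hD, hCD⟩ := exists_seqProd'_update_eq
    (B := fun i => rotMat (α i) * A i) (fun i => by rw [det_mul, det_rotMat, hA, one_mul]) k
  have hsplit : ∀ t, (seqProd' fun i => rotMat (Function.update α k t i) * A i) =
      C * rotMat t * (A k * D) := fun t => by
    rw [← Matrix.mul_assoc, Matrix.mul_assoc C, ← hCD]
    exact congrArg seqProd' (funext (Function.apply_update (fun i a => rotMat a * A i) α k t))
  simp only [hsplit] at h ⊢
  simpa [rotMat_zero] using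
    le_ellipticAngle_mul_rotMat_mul hC (by rw [det_mul, hA, hD, one_mul]) hΔ h

def stairAngles {p : ℕ} (δ : ℝ) (k : ℕ) (i : Fin p) : ℝ := if (i : ℕ) < k then δ else 0

lemma update_stairAngles_zero {p : ℕ} (δ : ℝ) (k : Fin p) :
    Function.update (stairAngles δ k) k 0 = stairAngles δ k :=
  Function.update_eq_self_iff.2 (by simp [stairAngles])

lemma update_stairAngles_self {p : ℕ} (δ : ℝ) (k : Fin p) :
    Function.update (stairAngles δ k) k δ = stairAngles δ (k + 1) := by
  funext i
  rcases eq_or_ne i k with rfl | hi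
  · simp [stairAngles]
  · have : (i : ℕ) ≠ k := Fin.val_ne_of_ne hi
    simp only [Function.update_of_ne hi, stairAngles]
    split_ifs <;> first | rfl | omega

lemma update_stairAngles_mem_Icc {p : ℕ} {δ : ℝ} (hδ : 0 ≤ δ) (k : Fin p) {t : ℝ}
    (ht : t ∈ Icc 0 δ) (i : Fin p) : Function.update (stairAngles δ k) k t i ∈ Icc 0 δ := by
  rcases eq_or_ne i k with rfl | hi
  · simpa using ht
  · simp only [Function.update_of_ne hi, stairAngles]
    split_ifs <;> simp [hδ]

lemma ellipticAngle_stairAngles_add_le {p : ℕ} {A : Fin p → Matrix (Fin 2) (Fin 2) ℝ}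
    (hA : ∀ i, (A i).det = 1) {δ : ℝ} (hδ : 0 ≤ δ)
    (helliptic : ∀ α : Fin p → ℝ, (∀ i, α i ∈ Icc 0 δ) →
      (seqProd' fun i => rotMat (α i) * A i).trace ^ 2 < 4) (k : Fin p) :
    ellipticAngle (seqProd' fun i => rotMat (stairAngles δ k i) * A i) + δ ≤
      ellipticAngle (seqProd' fun i => rotMat (stairAngles δ (k + 1) i) * A i) := by
  have := le_ellipticAngle_seqProd'_update hA (stairAngles δ k) k hδ
    fun t ht => helliptic _ (update_stairAngles_mem_Icc hδ k ht)
  rwa [update_stairAngles_zero, update_stairAngles_self] at this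

theorem exists_four_le_trace_sq_seqProd' {p : ℕ} {A : Fin p → Matrix (Fin 2) (Fin 2) ℝ}
    (hA : ∀ i, (A i).det = 1) {δ : ℝ} (hδ : 0 < δ) (hp : 2 * Real.pi < p * δ) :
    ∃ α : Fin p → ℝ, (∀ i, α i ∈ Icc 0 δ) ∧
      4 ≤ (seqProd' fun i => rotMat (α i) * A i).trace ^ 2 := by
  by_contra! helliptic
  have hgain : ∀ k ≤ p,
      ellipticAngle (seqProd' fun i => rotMat (stairAngles δ 0 i) * A i) + k * δ ≤
        ellipticAngle (seqProd' fun i => rotMat (stairAngles δ k i) * A i) := by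
    intro k hk
    induction k with
    | zero => simp
    | succ k ih =>
      push_cast
      linarith [ih (by omega), ellipticAngle_stairAngles_add_le hA hδ.le helliptic ⟨k, hk⟩]
  have h0 := abs_le.1 (abs_ellipticAngle_le_pi
    (seqProd' fun i => rotMat (stairAngles δ 0 i) * A i))
  have hp' := abs_le.1 (abs_ellipticAngle_le_pi
    (seqProd' fun i => rotMat (stairAngles δ p i) * A i))
  linarith [hgain p le_rfl]

theorem bonatti_crovisier_rotations :
    ∀ ε : ℝ, 0 < ε → ∃ N : ℕ, 1 ≤ N ∧ ∀ p : ℕ, N ≤ p →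
      ∀ A : Fin p → Matrix.SpecialLinearGroup (Fin 2) ℝ,
      ∃ α : Fin p → ℝ,
        (∀ i, α i ∈ Ioo (-ε) ε) ∧
        ∀ z ∈ specC (seqProd'
          (fun i => rotMat (α i) * (A i : Matrix (Fin 2) (Fin 2) ℝ))), z.im = 0 := by
  intro ε hε
  obtain ⟨N, hN⟩ := exists_nat_gt (2 * Real.pi / (ε / 2))
  have hN0 : (0 : ℝ) < N := lt_trans (by positivity) hN
  refine ⟨N, by exact_mod_cast hN0, fun p hp A => ?_⟩
  have hpδ : 2 * Real.pi < p * (ε / 2) := by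
    rw [div_lt_iff₀ (by positivity)] at hN
    exact hN.trans_le (by gcongr)
  obtain ⟨α, hα, htrace⟩ :=
    exists_four_le_trace_sq_seqProd' (fun i => (A i).prop) (half_pos hε) hpδ
  refine ⟨α, fun i => ⟨by linarith [(hα i).1], by linarith [(hα i).2]⟩, fun z hz => ?_⟩
  by_contra him
  have := trace_sq_lt_four_mul_det_of_mem_specC hz him
  rw [det_seqProd' fun i => by rw [det_mul, det_rotMat, (A i).prop, one_mul]] at this
  linarith
end

section
/- For every real ε > 0 there exists an integer N ≥ 1 such that for every p ≥ N and every sequence A_1, …, A_p of matrices in SL(2,ℝ) whose product A_p·A_{p−1}⋯A_1 has a non-real complex eigenvalue, there exist angles α_1, …, α_p in (−ε, ε) and a time t₀ ∈ (0,1] such that, writing M(t) = (R_{t·α_p}·A_p)·(R_{t·α_{p−1}}·A_{p−1})⋯(R_{t·α_1}·A_1) for t ∈ [0,1]: (i) M(t₀) has only real eigenvalues; (ii) for every t ∈ [0,t₀), M(t) has non-real eigenvalues; and (iii) for every t ∈ [0,t₀], every complex eigenvalue of M(t) has modulus 1. -/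
open Matrix Set

/-!
All angles are taken equal to some `α = ±π/p`. While the product `P(θ)` of the rotated
factors is elliptic (`|tr P(θ)| < 2`), `d/dθ tr P(θ)` is the sum of `tr (J X)` over the `p`
cyclic rearrangements `X` of the product, `J` the infinitesimal rotation. These are conjugate
to `P(θ)` in `SL(2,ℝ)`, and for an elliptic `X` the number `tr (J X)` has a
conjugation-invariant sign (the sense in which `X` turns the plane) and modulus at least
`√(4 - tr X ^ 2)`. With the sign of `α` chosen accordingly, `arcsin (tr P(θ) / 2)` grows at
rate at least `p` in `|θ|`, so it would leave `(-π/2, π/2)` before `|θ| = π/p`: the trace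
reaches `±2` on the way. The first such time is `t₀`; before it the eigenvalues are non-real
of modulus one, and at `t₀` they are both `±1`.
-/

open Real

theorem pos_of_continuousOn_Icc_of_ne_zero {g : ℝ → ℝ} {a b : ℝ}
    (hg : ContinuousOn g (Icc a b)) (hne : ∀ x ∈ Icc a b, g x ≠ 0) (ha : 0 < g a) :
    ∀ x ∈ Icc a b, 0 < g x := by
  intro x hx
  by_contra! hx0
  obtain ⟨c, hc, hc0⟩ :=
    intermediate_value_Icc' hx.1 (hg.mono (Icc_subset_Icc_right hx.2)) ⟨hx0, ha.le⟩
  exact hne c ⟨hc.1, hc.2.trans hx.2⟩ hc0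

theorem mul_sub_lt_pi_of_mul_sqrt_le_deriv {f f' : ℝ → ℝ} {a b c : ℝ} (hab : a < b)
    (hf : ∀ x ∈ Icc a b, HasDerivAt f (f' x) x) (hf_sq : ∀ x ∈ Icc a b, f x ^ 2 < 4)
    (hf' : ∀ x ∈ Icc a b, c * √(4 - f x ^ 2) ≤ f' x) : c * (b - a) < π := by
  have hsqrt : ∀ y : ℝ, √(4 - y ^ 2) = 2 * √(1 - (y / 2) ^ 2) := fun y => by
    rw [show 4 - y ^ 2 = 2 ^ 2 * (1 - (y / 2) ^ 2) by ring, Real.sqrt_mul (by norm_num),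
      Real.sqrt_sq (by norm_num)]
  have hbound : ∀ x ∈ Icc a b, -1 < f x / 2 ∧ f x / 2 < 1 := fun x hx => by
    constructor <;> nlinarith [hf_sq x hx]
  -- `arcsin (f / 2)` grows at least at rate `c`, but its values lie in `(-π/2, π/2)`.
  have hθ : ∀ x ∈ Icc a b, HasDerivAt (fun x => arcsin (f x / 2))
      (1 / √(1 - (f x / 2) ^ 2) * (f' x / 2)) x := fun x hx =>
    HasDerivAt.comp (h₂ := arcsin) x
      (Real.hasDerivAt_arcsin (hbound x hx).1.ne' (hbound x hx).2.ne) ((hf x hx).div_const 2)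
  obtain ⟨ξ, hξ, hslope⟩ := exists_hasDerivAt_eq_slope _ _ hab
    (fun x hx => (hθ x hx).continuousAt.continuousWithinAt)
    (fun x hx => hθ x (Ioo_subset_Icc_self hx))
  have hξ' : ξ ∈ Icc a b := Ioo_subset_Icc_self hξ
  have hpos : 0 < √(1 - (f ξ / 2) ^ 2) := Real.sqrt_pos.2 (by nlinarith [hbound ξ hξ'])
  have hc : c ≤ 1 / √(1 - (f ξ / 2) ^ 2) * (f' ξ / 2) := by
    rw [one_div_mul_eq_div, le_div_iff₀ hpos]
    linarith [hsqrt (f ξ) ▸ hf' ξ hξ']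
  have hb := Real.arcsin_lt_pi_div_two.2 (hbound b (right_mem_Icc.2 hab.le)).2
  have ha := Real.neg_pi_div_two_lt_arcsin.2 (hbound a (left_mem_Icc.2 hab.le)).1
  rw [hslope, le_div_iff₀ (sub_pos.2 hab)] at hc
  linarith

theorem exists_first_hitting_time {g : ℝ → ℝ} {c : ℝ} (hg : Continuous g) (h0 : g 0 < c)
    (h1 : ∃ t ∈ Icc (0 : ℝ) 1, c ≤ g t) :
    ∃ t₀ ∈ Ioc (0 : ℝ) 1, g t₀ = c ∧ ∀ t ∈ Ico 0 t₀, g t < c := by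
  set S := Icc (0 : ℝ) 1 ∩ {t | c ≤ g t}
  have hS : IsCompact S := isCompact_Icc.inter_right (isClosed_le continuous_const hg)
  obtain ⟨t₁, ht₁, hct₁⟩ := h1
  obtain ⟨t₀, ⟨ht₀, hct₀ : c ≤ g t₀⟩, hmin⟩ := hS.exists_isLeast ⟨t₁, ht₁, hct₁⟩
  have hpos : 0 < t₀ := ht₀.1.lt_of_ne fun h => by rw [← h] at hct₀; linarith
  have hbefore : ∀ t ∈ Ico 0 t₀, g t < c := fun t ht => by
    by_contra! hct
    exact (hmin ⟨⟨ht.1, ht.2.le.trans ht₀.2⟩, hct⟩).not_gt ht.2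
  refine ⟨t₀, ⟨hpos, ht₀.2⟩, le_antisymm ?_ hct₀, hbefore⟩
  by_contra! hlt
  obtain ⟨t, ht, hgt⟩ := intermediate_value_Ico hpos.le hg.continuousOn ⟨h0.le, hlt⟩
  exact (hbefore t ht).ne hgt

namespace SLTwo

variable {M X C : Matrix (Fin 2) (Fin 2) ℝ} {L : List (Matrix (Fin 2) (Fin 2) ℝ)}

open Polynomial in
theorem mem_specC_iff (hM : M.det = 1) (z : ℂ) :
    z ∈ specC M ↔ z ^ 2 - (M.trace : ℂ) * z + 1 = 0 := by
  have hdet : (M.map (algebraMap ℝ ℂ)).det = 1 := by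
    rw [← RingHom.mapMatrix_apply, ← RingHom.map_det, hM, map_one]
  have hchar : (M.map (algebraMap ℝ ℂ)).charpoly = X ^ 2 - C (M.trace : ℂ) * X + C 1 := by
    rw [charpoly_fin_two, hdet, trace_fin_two, trace_fin_two]
    simp
  rw [specC, mem_roots (Matrix.charpoly_monic _).ne_zero, hchar]
  simp

theorem re_im_of_quadratic_root {τ : ℝ} {z : ℂ} (h : z ^ 2 - τ * z + 1 = 0) :
    z.im * (2 * z.re - τ) = 0 ∧ z.re ^ 2 - z.im ^ 2 - τ * z.re + 1 = 0 := by
  have h_im := congrArg Complex.im h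
  have h_re := congrArg Complex.re h
  simp only [sq, Complex.sub_re, Complex.sub_im, Complex.add_re, Complex.add_im,
    Complex.mul_re, Complex.mul_im, Complex.ofReal_re, Complex.ofReal_im, Complex.one_re,
    Complex.one_im, Complex.zero_re, Complex.zero_im] at h_im h_re
  exact ⟨by linear_combination h_im, by linear_combination h_re⟩

theorem sq_trace_lt_four_of_mem_specC (hM : M.det = 1) {z : ℂ} (hz : z ∈ specC M)
    (him : z.im ≠ 0) : M.trace ^ 2 < 4 := by
  obtain ⟨h_im, h_re⟩ := re_im_of_quadratic_root ((mem_specC_iff hM z).1 hz)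
  have hre : 2 * z.re = M.trace := by linarith [(mul_eq_zero.1 h_im).resolve_left him]
  nlinarith [pow_pos (abs_pos.2 him) 2, sq_abs z.im]

theorem im_eq_zero_of_mem_specC (hM : M.det = 1) (htr : M.trace ^ 2 = 4) :
    ∀ z ∈ specC M, z.im = 0 := by
  intro z hz
  by_contra him
  exact (sq_trace_lt_four_of_mem_specC hM hz him).ne htr

theorem norm_eq_one_of_mem_specC (hM : M.det = 1) (htr : M.trace ^ 2 ≤ 4) :
    ∀ z ∈ specC M, ‖z‖ = 1 := by
  intro z hz
  obtain ⟨h_im, h_re⟩ := re_im_of_quadratic_root ((mem_specC_iff hM z).1 hz)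
  have hre : 2 * z.re = M.trace := by
    rcases mul_eq_zero.1 h_im with h | h
    · rw [h] at h_re
      nlinarith [sq_nonneg (2 * z.re - M.trace)]
    · linarith
  have hnormSq : Complex.normSq z = 1 := by
    rw [Complex.normSq_apply]
    linear_combination -h_re + z.re * hre
  rw [← Real.sqrt_one, ← hnormSq, Complex.norm_def]

theorem exists_mem_specC_im_ne_zero (hM : M.det = 1) (htr : M.trace ^ 2 < 4) :
    ∃ z ∈ specC M, z.im ≠ 0 := by
  set r := √(4 - M.trace ^ 2)
  have hr_sq : r ^ 2 = 4 - M.trace ^ 2 := Real.sq_sqrt (by linarith)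
  have hr_pos : 0 < r := Real.sqrt_pos.2 (by linarith)
  refine ⟨(M.trace / 2 : ℝ) + (r / 2 : ℝ) * Complex.I, (mem_specC_iff hM _).2 ?_,
    by simpa using hr_pos.ne'⟩
  have hr_sqC : (r : ℂ) ^ 2 = 4 - (M.trace : ℂ) ^ 2 := by exact_mod_cast hr_sq
  push_cast
  linear_combination (Complex.I ^ 2 / 4) * hr_sqC + ((4 - (M.trace : ℂ) ^ 2) / 4) * Complex.I_sq

def rotGen : Matrix (Fin 2) (Fin 2) ℝ := !![0, -1; 1, 0]

theorem trace_rotGen_mul (N : Matrix (Fin 2) (Fin 2) ℝ) :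
    trace (rotGen * N) = N 0 1 - N 1 0 := by
  rw [trace_fin_two]
  simp only [rotGen, Matrix.mul_apply, of_apply, cons_val', cons_val_fin_one, cons_val_zero,
    cons_val_one, Fin.sum_univ_two, zero_mul, neg_mul, one_mul, zero_add, add_zero]
  ring

theorem four_sub_sq_trace_le (hX : X.det = 1) : 4 - X.trace ^ 2 ≤ trace (rotGen * X) ^ 2 := by
  rw [det_fin_two] at hX
  rw [trace_rotGen_mul, trace_fin_two]
  nlinarith [sq_nonneg (X 0 1 + X 1 0), sq_nonneg (X 0 0 - X 1 1)]

theorem sqrt_le_mul_trace_rotGen_mul (hX : X.det = 1) {s : ℝ} (hs : |s| = 1)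
    (hpos : 0 < s * trace (rotGen * X)) :
    √(4 - X.trace ^ 2) ≤ s * trace (rotGen * X) := by
  rw [Real.sqrt_le_iff, mul_pow, ← sq_abs s, hs, one_pow, one_mul]
  exact ⟨hpos.le, four_sub_sq_trace_le hX⟩

-- The signed area of `(v, M v)`: definite when `M` is elliptic, with the sign of the sense in
-- which `M` turns the plane.
def rotationForm (M : Matrix (Fin 2) (Fin 2) ℝ) (v : Fin 2 → ℝ) : ℝ :=
  v 0 * (M *ᵥ v) 1 - v 1 * (M *ᵥ v) 0

theorem trace_rotGen_mul_eq_neg_rotationForm (N : Matrix (Fin 2) (Fin 2) ℝ) :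
    trace (rotGen * N) = -(rotationForm N ![1, 0] + rotationForm N ![0, 1]) := by
  simp only [trace_rotGen_mul, rotationForm, mulVec, dotProduct, Fin.sum_univ_two, cons_val_zero,
    cons_val_one, cons_val_fin_one, mul_one, mul_zero, add_zero, one_mul, zero_mul, sub_zero,
    zero_add, zero_sub]
  ring

theorem rotationForm_mulVec (hCX : C * X = M * C) (v : Fin 2 → ℝ) :
    rotationForm M (C *ᵥ v) = C.det * rotationForm X v := by
  have hMC : M *ᵥ (C *ᵥ v) = C *ᵥ (X *ᵥ v) := by rw [mulVec_mulVec, mulVec_mulVec, hCX]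
  simp only [rotationForm, hMC]
  simp only [mulVec, dotProduct, Fin.sum_univ_two, det_fin_two]
  ring

theorem mul_rotationForm_pos (hM : M.det = 1) (htr : M.trace ^ 2 < 4) {v : Fin 2 → ℝ}
    (hv : v ≠ 0) : 0 < M 1 0 * rotationForm M v := by
  rw [det_fin_two] at hM
  rw [trace_fin_two] at htr
  have key : 4 * (M 1 0 * rotationForm M v) =
      (2 * M 1 0 * v 0 + (M 1 1 - M 0 0) * v 1) ^ 2 + (4 - (M 0 0 + M 1 1) ^ 2) * v 1 ^ 2 := by
    simp only [rotationForm, mulVec, dotProduct, Fin.sum_univ_two]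
    linear_combination (4 * v 1 ^ 2) * hM
  have hM10 : M 1 0 ≠ 0 := fun h => by
    rw [h] at hM
    nlinarith [sq_nonneg (M 0 0 - M 1 1)]
  by_cases hv1 : v 1 = 0
  · have hv0 : v 0 ≠ 0 := fun h0 => hv (by ext i; fin_cases i <;> simp [h0, hv1])
    rw [hv1] at key
    nlinarith [sq_pos_of_ne_zero (mul_ne_zero (mul_ne_zero two_ne_zero hM10) hv0)]
  · nlinarith [sq_pos_of_ne_zero hv1, sq_nonneg (2 * M 1 0 * v 0 + (M 1 1 - M 0 0) * v 1)]

theorem trace_rotGen_mul_pos_of_conj (hM : M.det = 1) (htr : M.trace ^ 2 < 4)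
    (hC : C.det = 1) (hCX : C * X = M * C) : 0 < trace (rotGen * M) * trace (rotGen * X) := by
  have hC0 : C.det ≠ 0 := hC ▸ one_ne_zero
  have hCv : ∀ v : Fin 2 → ℝ, v ≠ 0 → C *ᵥ v ≠ 0 := fun v hv h =>
    hC0 (Matrix.exists_mulVec_eq_zero_iff.1 ⟨v, hv, h⟩)
  have he0 : (![1, 0] : Fin 2 → ℝ) ≠ 0 := fun h => by simpa using congrFun h 0
  have he1 : (![0, 1] : Fin 2 → ℝ) ≠ 0 := fun h => by simpa using congrFun h 1
  -- Both traces have the sign opposite to that of `M 1 0`.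
  have hMneg : M 1 0 * trace (rotGen * M) < 0 := by
    rw [trace_rotGen_mul_eq_neg_rotationForm]
    nlinarith [mul_rotationForm_pos hM htr he0, mul_rotationForm_pos hM htr he1]
  have hXneg : M 1 0 * trace (rotGen * X) < 0 := by
    have hform : ∀ v, rotationForm X v = rotationForm M (C *ᵥ v) := fun v => by
      rw [rotationForm_mulVec hCX, hC, one_mul]
    rw [trace_rotGen_mul_eq_neg_rotationForm, hform, hform]
    nlinarith [mul_rotationForm_pos hM htr (hCv _ he0), mul_rotationForm_pos hM htr (hCv _ he1)]
  exact pos_of_mul_pos_right (by nlinarith [mul_pos_of_neg_of_neg hMneg hXneg]) (sq_nonneg (M 1 0))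

theorem sqrt_le_mul_trace_rotGen_mul_of_conj (hM : M.det = 1) (htr : M.trace ^ 2 < 4)
    (hC : C.det = 1) (hCX : C * X = M * C) (hX : X.det = 1) {s : ℝ} (hs : |s| = 1)
    (hpos : 0 < s * trace (rotGen * M)) :
    √(4 - X.trace ^ 2) ≤ s * trace (rotGen * X) := by
  have hMX := trace_rotGen_mul_pos_of_conj hM htr hC hCX
  refine sqrt_le_mul_trace_rotGen_mul hX hs
    (pos_of_mul_pos_right ?_ (sq_nonneg (trace (rotGen * M))))
  nlinarith [mul_pos hpos hMX]

theorem rotMat_eq (θ : ℝ) : rotMat θ = Real.cos θ • 1 + Real.sin θ • rotGen := by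
  ext i j; fin_cases i <;> fin_cases j <;> simp [rotMat, rotGen]

theorem rotGen_mul_rotGen : rotGen * rotGen = -1 := by
  ext i j; fin_cases i <;> fin_cases j <;> simp [rotGen]

theorem det_rotMat (θ : ℝ) : (rotMat θ).det = 1 := by
  simp [rotMat, det_fin_two_of, ← sq, Real.cos_sq_add_sin_sq]

theorem rotMat_zero : rotMat 0 = 1 := by
  simp [rotMat, Matrix.one_fin_two]

noncomputable def rotatedProd (L : List (Matrix (Fin 2) (Fin 2) ℝ)) (θ : ℝ) :
    Matrix (Fin 2) (Fin 2) ℝ :=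
  (L.map (rotMat θ * ·)).prod

@[simp]
theorem rotatedProd_nil (θ : ℝ) : rotatedProd [] θ = 1 := rfl

@[simp]
theorem rotatedProd_cons (A : Matrix (Fin 2) (Fin 2) ℝ) (L : List (Matrix (Fin 2) (Fin 2) ℝ))
    (θ : ℝ) : rotatedProd (A :: L) θ = rotMat θ * A * rotatedProd L θ := by
  simp [rotatedProd]

theorem rotatedProd_append (L₁ L₂ : List (Matrix (Fin 2) (Fin 2) ℝ)) (θ : ℝ) :
    rotatedProd (L₁ ++ L₂) θ = rotatedProd L₁ θ * rotatedProd L₂ θ := by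
  simp [rotatedProd]

theorem rotatedProd_zero (L : List (Matrix (Fin 2) (Fin 2) ℝ)) : rotatedProd L 0 = L.prod := by
  simp [rotatedProd, rotMat_zero]

theorem det_rotatedProd (hL : ∀ A ∈ L, A.det = 1) (θ : ℝ) : (rotatedProd L θ).det = 1 := by
  induction L with
  | nil => simp
  | cons A L ih =>
    simp only [List.mem_cons, forall_eq_or_imp] at hL
    rw [rotatedProd_cons, det_mul, det_mul, det_rotMat, hL.1, ih hL.2, one_mul, one_mul]

noncomputable def rotatedProdDeriv (L : List (Matrix (Fin 2) (Fin 2) ℝ)) (θ : ℝ) :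
    Matrix (Fin 2) (Fin 2) ℝ :=
  ∑ k ∈ Finset.range L.length, rotatedProd (L.take k) θ * rotGen * rotatedProd (L.drop k) θ

theorem rotatedProdDeriv_cons (A : Matrix (Fin 2) (Fin 2) ℝ)
    (L : List (Matrix (Fin 2) (Fin 2) ℝ)) (θ : ℝ) :
    rotatedProdDeriv (A :: L) θ =
      rotGen * rotatedProd (A :: L) θ + rotMat θ * A * rotatedProdDeriv L θ := by
  simp only [rotatedProdDeriv, List.length_cons, Finset.sum_range_succ', List.take_succ_cons,
    List.drop_succ_cons, rotatedProd_cons, List.take_zero, List.drop_zero, rotatedProd_nil,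
    Finset.mul_sum, mul_assoc, one_mul]
  rw [add_comm]

-- Stated for real linear functionals of the product because matrices carry no default norm;
-- the induction then only needs scalar calculus, through `rotMat_eq`.
theorem hasDerivAt_linearMap_rotatedProd (L : List (Matrix (Fin 2) (Fin 2) ℝ))
    (φ : Matrix (Fin 2) (Fin 2) ℝ →ₗ[ℝ] ℝ) (θ : ℝ) :
    HasDerivAt (fun θ => φ (rotatedProd L θ)) (φ (rotatedProdDeriv L θ)) θ := by
  induction L generalizing φ with
  | nil => simpa [rotatedProdDeriv] using hasDerivAt_const θ (φ 1)
  | cons A L ih =>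
    have h := ((Real.hasDerivAt_cos θ).mul (ih (φ ∘ₗ LinearMap.mulLeft ℝ A))).add
      ((Real.hasDerivAt_sin θ).mul (ih (φ ∘ₗ LinearMap.mulLeft ℝ (rotGen * A))))
    have hfun : (fun θ => φ (rotatedProd (A :: L) θ)) = fun θ =>
        Real.cos θ * φ (A * rotatedProd L θ) + Real.sin θ * φ (rotGen * A * rotatedProd L θ) := by
      ext θ
      simp [rotMat_eq, add_mul, mul_assoc]
    have hderiv : φ (rotatedProdDeriv (A :: L) θ) =
        -Real.sin θ * φ (A * rotatedProd L θ) + Real.cos θ * φ (A * rotatedProdDeriv L θ) +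
        (Real.cos θ * φ (rotGen * A * rotatedProd L θ) +
          Real.sin θ * φ (rotGen * A * rotatedProdDeriv L θ)) := by
      simp only [rotatedProdDeriv_cons, rotatedProd_cons, rotMat_eq, add_mul, mul_add,
        Algebra.smul_mul_assoc, Algebra.mul_smul_comm, one_mul, ← mul_assoc, rotGen_mul_rotGen,
        neg_mul, smul_neg, map_add, map_smul, map_neg, smul_eq_mul]
      ring
    rw [hfun, hderiv]
    exact h

theorem trace_rotatedProdDeriv (L : List (Matrix (Fin 2) (Fin 2) ℝ)) (θ : ℝ) :
    trace (rotatedProdDeriv L θ) = ∑ k ∈ Finset.range L.length,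
      trace (rotGen * (rotatedProd (L.drop k) θ * rotatedProd (L.take k) θ)) := by
  rw [rotatedProdDeriv, trace_sum]
  refine Finset.sum_congr rfl fun k _ => ?_
  rw [trace_mul_cycle, trace_mul_comm]

theorem hasDerivAt_linearMap_rotatedProd_mul (L : List (Matrix (Fin 2) (Fin 2) ℝ))
    (φ : Matrix (Fin 2) (Fin 2) ℝ →ₗ[ℝ] ℝ) (α t : ℝ) :
    HasDerivAt (fun t => φ (rotatedProd L (t * α))) (φ (rotatedProdDeriv L (t * α)) * α) t :=
  HasDerivAt.comp (h₂ := fun θ => φ (rotatedProd L θ)) t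
    (hasDerivAt_linearMap_rotatedProd L φ (t * α)) (hasDerivAt_mul_const α)

theorem length_mul_sqrt_le_trace_rotatedProdDeriv (hL : ∀ A ∈ L, A.det = 1) {θ : ℝ}
    (htr : (rotatedProd L θ).trace ^ 2 < 4) {s : ℝ} (hs : |s| = 1)
    (hpos : 0 < s * trace (rotGen * rotatedProd L θ)) :
    L.length * √(4 - (rotatedProd L θ).trace ^ 2) ≤
      s * trace (rotatedProdDeriv L θ) := by
  rw [trace_rotatedProdDeriv, Finset.mul_sum]
  refine le_of_eq_of_le (by simp) (Finset.card_nsmul_le_sum (Finset.range L.length) _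
    (√(4 - (rotatedProd L θ).trace ^ 2)) fun k _ => ?_)
  set T := rotatedProd (L.take k) θ
  set D := rotatedProd (L.drop k) θ
  have hsplit : rotatedProd L θ = T * D := by
    rw [← rotatedProd_append, List.take_append_drop]
  have hT : T.det = 1 := det_rotatedProd (fun A hA => hL A (List.mem_of_mem_take hA)) θ
  have hD : D.det = 1 := det_rotatedProd (fun A hA => hL A (List.mem_of_mem_drop hA)) θ
  -- `D * T` is conjugate to `T * D` by `T`.
  have h := sqrt_le_mul_trace_rotGen_mul_of_conj (det_rotatedProd hL θ) htr hT
    (X := D * T) (by rw [hsplit, mul_assoc]) (by rw [det_mul, hD, hT, one_mul]) hs hpos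
  rwa [trace_mul_comm D T, ← hsplit] at h

theorem continuous_linearMap_rotatedProd_mul (L : List (Matrix (Fin 2) (Fin 2) ℝ))
    (φ : Matrix (Fin 2) (Fin 2) ℝ →ₗ[ℝ] ℝ) (α : ℝ) :
    Continuous fun t => φ (rotatedProd L (t * α)) :=
  continuous_iff_continuousAt.2 fun t =>
    (hasDerivAt_linearMap_rotatedProd_mul L φ α t).continuousAt

theorem exists_angle_sq_trace_rotatedProd_ge_four (hL : ∀ A ∈ L, A.det = 1) (hne : L ≠ [])
    (htr : L.prod.trace ^ 2 < 4) :
    ∃ α : ℝ, |α| = π / L.length ∧ ∃ t ∈ Icc (0 : ℝ) 1, 4 ≤ (rotatedProd L (t * α)).trace ^ 2 := by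
  have hn : (0 : ℝ) < L.length := by exact_mod_cast List.length_pos_of_ne_nil hne
  have hdet : ∀ θ, (rotatedProd L θ).det = 1 := det_rotatedProd hL
  have hrot_ne : ∀ θ, (rotatedProd L θ).trace ^ 2 < 4 → trace (rotGen * rotatedProd L θ) ≠ 0 :=
    fun θ hθ h => by nlinarith [four_sub_sq_trace_le (hdet θ)]
  obtain ⟨s, hs, hs_pos⟩ : ∃ s : ℝ, |s| = 1 ∧ 0 < s * trace (rotGen * L.prod) := by
    rcases (rotatedProd_zero L ▸ hrot_ne 0 (rotatedProd_zero L ▸ htr)).lt_or_gt with h | h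
    · exact ⟨-1, by simp, by linarith⟩
    · exact ⟨1, by simp, by linarith⟩
  refine ⟨s * (π / L.length), by rw [abs_mul, hs, one_mul, abs_of_pos (by positivity)], ?_⟩
  by_contra! hlt
  set α := s * (π / L.length)
  -- The direction of rotation cannot change while the product stays elliptic.
  have hsign : ∀ t ∈ Icc (0 : ℝ) 1, 0 < s * trace (rotGen * rotatedProd L (t * α)) := by
    refine pos_of_continuousOn_Icc_of_ne_zero ((continuous_const.mul
      (continuous_linearMap_rotatedProd_mul L
        (Matrix.traceLinearMap _ ℝ ℝ ∘ₗ LinearMap.mulLeft ℝ rotGen) α)).continuousOn)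
      (fun t ht h => ?_) (by simpa [rotatedProd_zero] using hs_pos)
    have hs0 : s ≠ 0 := by rintro rfl; simp at hs
    exact hrot_ne _ (hlt t ht) ((mul_eq_zero.1 h).resolve_left hs0)
  refine (mul_sub_lt_pi_of_mul_sqrt_le_deriv zero_lt_one
    (fun t _ => hasDerivAt_linearMap_rotatedProd_mul L (Matrix.traceLinearMap _ ℝ ℝ) α t)
    hlt fun t ht => ?_).ne (by ring)
  have h := length_mul_sqrt_le_trace_rotatedProdDeriv hL (hlt t ht) hs (hsign t ht)
  calc π * √(4 - (rotatedProd L (t * α)).trace ^ 2)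
      = π / L.length * (L.length * √(4 - (rotatedProd L (t * α)).trace ^ 2)) := by
        field_simp
    _ ≤ π / L.length * (s * trace (rotatedProdDeriv L (t * α))) := by gcongr
    _ = _ := by simp only [α, traceLinearMap_apply]; ring

theorem seqProd'_rotMat_mul {p : ℕ} (A : Fin p → Matrix (Fin 2) (Fin 2) ℝ) (θ : ℝ) :
    seqProd' (fun i => rotMat θ * A i) = rotatedProd (List.ofFn A).reverse θ := by
  simp only [seqProd', rotatedProd, List.map_reverse, List.map_ofFn]
  rfl

end SLTwo

open SLTwo

theorem rotations_path_to_real_eigenvalues :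
    ∀ ε : ℝ, 0 < ε → ∃ N : ℕ, 1 ≤ N ∧ ∀ p : ℕ, N ≤ p →
      ∀ A : Fin p → Matrix.SpecialLinearGroup (Fin 2) ℝ,
      -- the product has a non-real eigenvalue
      (∃ z ∈ specC (seqProd' (fun i => (A i : Matrix (Fin 2) (Fin 2) ℝ))), z.im ≠ 0) →
      ∃ α : Fin p → ℝ, ∃ t₀ : ℝ, t₀ ∈ Ioc (0:ℝ) 1 ∧
        (∀ i, α i ∈ Ioo (-ε) ε) ∧
        -- (i) at time `t₀` all eigenvalues of the product are real
        (∀ z ∈ specC (seqProd'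
            (fun i => rotMat (t₀ * α i) * (A i : Matrix (Fin 2) (Fin 2) ℝ))), z.im = 0) ∧
        -- (ii) for `t < t₀` the product has non-real eigenvalues
        (∀ t ∈ Ico (0:ℝ) t₀,
          ∃ z ∈ specC (seqProd'
            (fun i => rotMat (t * α i) * (A i : Matrix (Fin 2) (Fin 2) ℝ))), z.im ≠ 0) ∧
        -- (iii) for `t ∈ [0, t₀]` every eigenvalue of the product has modulus 1
        (∀ t ∈ Icc (0:ℝ) t₀,
          ∀ z ∈ specC (seqProd'
            (fun i => rotMat (t * α i) * (A i : Matrix (Fin 2) (Fin 2) ℝ))),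
          ‖z‖ = 1) := by
  intro ε hε
  refine ⟨⌈π / ε⌉₊ + 1, by omega, fun p hp A hA => ?_⟩
  set L := (List.ofFn fun i => (A i : Matrix (Fin 2) (Fin 2) ℝ)).reverse
  have hL : ∀ B ∈ L, B.det = 1 := by simp [L]
  have hdet : ∀ θ, (rotatedProd L θ).det = 1 := det_rotatedProd hL
  have hpε : π / p < ε := by
    rw [div_lt_iff₀ (by exact_mod_cast (show 0 < p by omega)), ← div_lt_iff₀' hε]
    exact (Nat.le_ceil _).trans_lt (by exact_mod_cast (show ⌈π / ε⌉₊ < p by omega))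
  obtain ⟨z, hz, hz_im⟩ := hA
  have htr : L.prod.trace ^ 2 < 4 :=
    sq_trace_lt_four_of_mem_specC (rotatedProd_zero L ▸ hdet 0) hz hz_im
  obtain ⟨α, hα, t₁, ht₁, h4⟩ :=
    exists_angle_sq_trace_rotatedProd_ge_four hL (by simp [L]; omega) htr
  obtain ⟨t₀, ht₀, heq, hbefore⟩ := exists_first_hitting_time
    ((continuous_linearMap_rotatedProd_mul L (Matrix.traceLinearMap _ ℝ ℝ) α).pow 2)
    (by simpa [rotatedProd_zero] using htr) ⟨t₁, ht₁, h4⟩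
  have hle : ∀ t ∈ Icc 0 t₀, (rotatedProd L (t * α)).trace ^ 2 ≤ 4 := fun t ht =>
    ht.2.lt_or_eq.elim (fun h => (hbefore t ⟨ht.1, h⟩).le) (fun h => h ▸ heq.le)
  refine ⟨fun _ => α, t₀, ht₀, fun _ => abs_lt.1 (by simpa [L, hα] using hpε), ?_, ?_, ?_⟩
  · simpa [seqProd'_rotMat_mul] using im_eq_zero_of_mem_specC (hdet _) heq
  · simpa [seqProd'_rotMat_mul] using
      fun t ht => exists_mem_specC_im_ne_zero (hdet _) (hbefore t ht)
  · simpa [seqProd'_rotMat_mul] using fun t ht => norm_eq_one_of_mem_specC (hdet _) (hle t ht)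
end
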